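/- Let n ≥ 2 and let ρ : (0,∞) → (0,∞) be a strictly monotone C² function. Define h(x) = (x/|x|)·ρ(|x|) for x ∈ ℝⁿ \ {0}. Then there exist constants 0 < c(n) ≤ C(n) depending only on n such that for every x ≠ 0: c(n)·max{ |ρ''(|x|)|, |ρ(|x|)/|x|² − ρ'(|x|)/|x|| } ≤ |D²h(x)| ≤ C(n)·max{ |ρ''(|x|)|, |ρ(|x|)/|x|² − ρ'(|x|)/|x|| }. -/

import Mathlib

open MeasureTheory Metric Set Filter
open scoped ENNReal ContDiff NNReal Topology

noncomputable section

/-- `G` is a weak (distributional) derivative of `f` on the open set `Ω`: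
integration by parts against all smooth compactly supported test functions
whose support lies in `Ω`. -/
def HasWeakFDerivOn {n : ℕ} {F : Type*} [NormedAddCommGroup F] [NormedSpace ℝ F]
    (Ω : Set (EuclideanSpace ℝ (Fin n))) (f : EuclideanSpace ℝ (Fin n) → F)
    (G : EuclideanSpace ℝ (Fin n) → EuclideanSpace ℝ (Fin n) →L[ℝ] F) : Prop :=
  ∀ φ : EuclideanSpace ℝ (Fin n) → ℝ, ContDiff ℝ ∞ φ → HasCompactSupport φ →
    tsupport φ ⊆ Ω → ∀ v : EuclideanSpace ℝ (Fin n),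
      ∫ x in Ω, fderiv ℝ φ x v • f x = - ∫ x in Ω, φ x • G x v

/-- Membership in the Sobolev space `W^{1,b}(Ω)` for real-valued functions:
the function and its weak derivative belong to `L^b(Ω)`. -/
def MemW1 {n : ℕ} (b : ℝ) (Ω : Set (EuclideanSpace ℝ (Fin n)))
    (g : EuclideanSpace ℝ (Fin n) → ℝ) : Prop :=
  MemLp g (ENNReal.ofReal b) (volume.restrict Ω) ∧
  ∃ G, HasWeakFDerivOn Ω g G ∧ MemLp G (ENNReal.ofReal b) (volume.restrict Ω)

/-- Membership in the Sobolev space `W^{2,q}(Ω, ℝⁿ)`: the map and its weak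
derivatives of order one and two belong to `L^q(Ω)`. -/
def MemW2 {n : ℕ} (q : ℝ) (Ω : Set (EuclideanSpace ℝ (Fin n)))
    (f : EuclideanSpace ℝ (Fin n) → EuclideanSpace ℝ (Fin n)) : Prop :=
  MemLp f (ENNReal.ofReal q) (volume.restrict Ω) ∧
  ∃ G H, HasWeakFDerivOn Ω f G ∧ HasWeakFDerivOn Ω G H ∧
    MemLp G (ENNReal.ofReal q) (volume.restrict Ω) ∧
    MemLp H (ENNReal.ofReal q) (volume.restrict Ω)

/-- The set of points of `Ω` at which the precise (quasicontinuous)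
representative of `g` is defined and equals `0`, i.e. the points having
Lebesgue value `0`. -/
def zeroLebesgueSet {n : ℕ} (Ω : Set (EuclideanSpace ℝ (Fin n)))
    (g : EuclideanSpace ℝ (Fin n) → ℝ) : Set (EuclideanSpace ℝ (Fin n)) :=
  {x ∈ Ω | Tendsto (fun r : ℝ => ⨍ y in ball x r, |g y|) (𝓝[>] 0) (𝓝 0)}

/-- `|g|^{-a} ∈ L¹(Ω)` (stated with the `ℝ≥0∞`-valued integral, so that it in
particular forces `g ≠ 0` almost everywhere). -/
def InvPowIntegrableOn {n : ℕ} (Ω : Set (EuclideanSpace ℝ (Fin n)))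
    (g : EuclideanSpace ℝ (Fin n) → ℝ) (a : ℝ) : Prop :=
  ∫⁻ x in Ω, ((ENNReal.ofReal |g x|) ^ a)⁻¹ < ⊤

/-- `f` restricted to `s` is a homeomorphism of `s` onto its image. -/
def IsHomeoOnto {n : ℕ} (f : EuclideanSpace ℝ (Fin n) → EuclideanSpace ℝ (Fin n))
    (s : Set (EuclideanSpace ℝ (Fin n))) : Prop :=
  ∃ e : ↥s ≃ₜ ↥(f '' s), ∀ x : ↥s, (e x : EuclideanSpace ℝ (Fin n)) = f x

/-- A bounded Lipschitz domain: a bounded connected open set whose boundary is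
locally the region below the graph of a Lipschitz function (in a suitable
direction `u`). -/
def IsLipschitzDomain {n : ℕ} (Ω : Set (EuclideanSpace ℝ (Fin n))) : Prop :=
  IsOpen Ω ∧ IsConnected Ω ∧ Bornology.IsBounded Ω ∧
  ∀ x ∈ frontier Ω, ∃ r : ℝ, 0 < r ∧ ∃ u : EuclideanSpace ℝ (Fin n), ‖u‖ = 1 ∧
    ∃ (g : EuclideanSpace ℝ (Fin n) → ℝ) (L : ℝ≥0), LipschitzWith L g ∧
      Ω ∩ ball x r = {y ∈ ball x r | (inner ℝ y u : ℝ) < g (y - (inner ℝ y u : ℝ) • u)}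

/-- The radial mapping `h(x) = (x/|x|) ρ(|x|)`. -/
def radialMap (n : ℕ) (ρ : ℝ → ℝ) (x : EuclideanSpace ℝ (Fin n)) :
    EuclideanSpace ℝ (Fin n) :=
  (ρ ‖x‖ / ‖x‖) • x

/-! With `φ(t) = ρ(t)/t` the map is `h(y) = φ(|y|) y`. Writing `r = |x|`, `u = x/r` and
`P = φ'(r) = ρ'(r)/r - ρ(r)/r²`, and using `r φ''(r) + 2 φ'(r) = ρ''(r)`, one computes
`D²h(x)(w, v) = P (⟨u,w⟩ v + ⟨u,v⟩ w + ⟨w,v⟩ u) + (ρ''(r) - 3P) ⟨u,w⟩ ⟨u,v⟩ u`.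
Evaluating at `(u, u)` gives `ρ''(r) u`, and at `(e, e)` for a unit vector `e ⊥ u` (which exists
since `n ≥ 2`) gives `P u`; so `|ρ''(r)|, |P| ≤ |D²h(x)|`, while the formula itself gives
`|D²h(x)| ≤ |ρ''(r)| + 6 |P|`. Thus `c = 1` and `C = 7` work. -/

open scoped RealInnerProductSpace
open ContinuousLinearMap

section

variable {E : Type*} [NormedAddCommGroup E] [InnerProductSpace ℝ E]

theorem hasFDerivAt_norm_of_ne_zero {x : E} (hx : x ≠ 0) :
    HasFDerivAt (‖·‖) (‖x‖⁻¹ • innerSL ℝ x) x := by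
  have hsqrt := (Real.hasDerivAt_sqrt (pow_ne_zero 2 (norm_ne_zero_iff.2 hx))).comp_hasFDerivAt x
    (hasStrictFDerivAt_norm_sq x).hasFDerivAt
  simp only [Function.comp_def, Real.sqrt_sq (norm_nonneg _)] at hsqrt
  refine hsqrt.congr_fderiv ?_
  ext w
  simp only [two_smul, smul_add, add_apply, smul_apply, coe_innerSL_apply, smul_eq_mul]
  field_simp
  ring

theorem exists_norm_eq_one_inner_eq_zero (h : 2 ≤ Module.finrank ℝ E) (x : E) :
    ∃ e : E, ‖e‖ = 1 ∧ ⟪x, e⟫ = 0 := by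
  have : FiniteDimensional ℝ E := Module.finite_of_finrank_pos (by omega)
  have hspan : Module.finrank ℝ (ℝ ∙ x) ≤ 1 := by
    simpa using finrank_span_le_card (R := ℝ) ({x} : Set E)
  have hperp : (ℝ ∙ x)ᗮ ≠ ⊥ := by
    intro hbot
    have := (ℝ ∙ x).finrank_add_finrank_orthogonal
    rw [hbot, finrank_bot] at this
    omega
  obtain ⟨b, hb, hb0⟩ := Submodule.exists_mem_ne_zero_of_ne_bot hperp
  refine ⟨(‖b‖⁻¹ : ℝ) • b, norm_smul_inv_norm hb0, ?_⟩
  rw [real_inner_smul_right, Submodule.mem_orthogonal_singleton_iff_inner_right.1 hb, mul_zero]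

def IsRadialHessian (B : E →L[ℝ] E →L[ℝ] E) (u : E) (A P : ℝ) : Prop :=
  ∀ w v, B w v = P • (⟪u, w⟫ • v + ⟪u, v⟫ • w + ⟪w, v⟫ • u) + ((A - 3 * P) * ⟪u, w⟫ * ⟪u, v⟫) • u

namespace IsRadialHessian

variable {B : E →L[ℝ] E →L[ℝ] E} {u : E} {A P : ℝ}

theorem abs_le_opNorm_radial (hB : IsRadialHessian B u A P) (hu : ‖u‖ = 1) : |A| ≤ ‖B‖ := by
  have huu : ⟪u, u⟫ = 1 := by rw [real_inner_self_eq_norm_sq, hu, one_pow]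
  have hBuu : B u u = A • u := by
    rw [hB, huu]
    module
  simpa [hBuu, norm_smul, hu] using B.le_opNorm₂ u u

theorem abs_le_opNorm_tangential (hB : IsRadialHessian B u A P) (hu : ‖u‖ = 1)
    (hE : 2 ≤ Module.finrank ℝ E) : |P| ≤ ‖B‖ := by
  obtain ⟨e, he, hue⟩ := exists_norm_eq_one_inner_eq_zero hE u
  have hee : ⟪e, e⟫ = 1 := by rw [real_inner_self_eq_norm_sq, he, one_pow]
  have hBee : B e e = P • u := by
    rw [hB, hue, hee]
    module
  simpa [hBee, norm_smul, hu, he] using B.le_opNorm₂ e e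

theorem opNorm_le (hB : IsRadialHessian B u A P) (hu : ‖u‖ = 1) : ‖B‖ ≤ |A| + 6 * |P| := by
  refine B.opNorm_le_bound₂ (by positivity) fun w v => ?_
  have huw : |⟪u, w⟫| ≤ ‖w‖ := by simpa [hu] using abs_real_inner_le_norm u w
  have huv : |⟪u, v⟫| ≤ ‖v‖ := by simpa [hu] using abs_real_inner_le_norm u v
  have hwv := abs_real_inner_le_norm w v
  calc ‖B w v‖ ≤ |P| * (|⟪u, w⟫| * ‖v‖ + |⟪u, v⟫| * ‖w‖ + |⟪w, v⟫|)
        + |A - 3 * P| * |⟪u, w⟫| * |⟪u, v⟫| := by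
        rw [hB]
        refine (norm_add_le _ _).trans ?_
        simp only [norm_smul, Real.norm_eq_abs, abs_mul, hu, mul_one]
        gcongr
        refine (norm_add₃_le).trans_eq ?_
        simp only [norm_smul, Real.norm_eq_abs, hu, mul_one]
    _ ≤ |P| * (‖w‖ * ‖v‖ + ‖v‖ * ‖w‖ + ‖w‖ * ‖v‖) + (|A| + 3 * |P|) * ‖w‖ * ‖v‖ := by
        have hA3 : |A - 3 * P| ≤ |A| + 3 * |P| := by
          simpa [abs_mul] using abs_sub A (3 * P)
        gcongr
    _ = (|A| + 6 * |P|) * ‖w‖ * ‖v‖ := by ring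

end IsRadialHessian

variable {φ φ' : ℝ → ℝ} {φ'' : ℝ} {x : E}

def radialFDeriv (φ φ' : ℝ → ℝ) (y : E) : E →L[ℝ] E :=
  φ ‖y‖ • ContinuousLinearMap.id ℝ E + (φ' ‖y‖ / ‖y‖) • (innerSL ℝ y).smulRight y

theorem hasFDerivAt_comp_norm_smul (hx : x ≠ 0) (hφ : HasDerivAt φ (φ' ‖x‖) ‖x‖) :
    HasFDerivAt (fun y : E => φ ‖y‖ • y) (radialFDeriv φ φ' x) x := by
  refine ((hφ.comp_hasFDerivAt x (hasFDerivAt_norm_of_ne_zero hx)).smul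
    (hasFDerivAt_id x)).congr_fderiv ?_
  ext w
  simp only [radialFDeriv, add_apply, smul_apply, smulRight_apply, id_apply,
    coe_innerSL_apply, smul_smul, smul_eq_mul, Function.comp_apply, id_eq]
  ring_nf

theorem exists_hasFDerivAt_radialFDeriv_isRadialHessian (hx : x ≠ 0)
    (hφ : HasDerivAt φ (φ' ‖x‖) ‖x‖) (hφ' : HasDerivAt φ' φ'' ‖x‖) :
    ∃ B, HasFDerivAt (radialFDeriv φ φ') B x ∧
      IsRadialHessian B (‖x‖⁻¹ • x) (‖x‖ * φ'' + 2 * φ' ‖x‖) (φ' ‖x‖) := by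
  have hr : ‖x‖ ≠ 0 := norm_ne_zero_iff.2 hx
  have hN := hasFDerivAt_norm_of_ne_zero hx
  have hscalar :=
    (hφ.comp_hasFDerivAt x hN).smul (hasFDerivAt_const (ContinuousLinearMap.id ℝ E) x)
  have hcoeff := (hφ'.div (hasDerivAt_id _) hr).comp_hasFDerivAt x hN
  let c : E →L[ℝ] E →L[ℝ] E →L[ℝ] E := (smulRightL ℝ E E).comp (innerSL ℝ)
  have hrankOne : HasFDerivAt (fun y : E => (innerSL ℝ y).smulRight y)
      ((c x).comp (ContinuousLinearMap.id ℝ E) + c.flip x) x :=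
    c.hasFDerivAt.clm_apply (hasFDerivAt_id x)
  have hsmulRightL : ∀ (a : E →L[ℝ] ℝ) (f : E), smulRightL ℝ E E a f = a.smulRight f :=
    fun _ _ => rfl
  refine ⟨_, (hscalar.add (hcoeff.smul hrankOne) :), fun w v => ?_⟩
  simp only [c, add_apply, smul_apply, smulRight_apply, comp_apply, flip_apply, id_apply,
    coe_innerSL_apply, hsmulRightL, real_inner_smul_left, smul_add, smul_smul, smul_eq_mul,
    smul_zero, zero_add, Function.comp_apply, id_eq, mul_one, Pi.div_apply]
  match_scalars <;> field_simp
  ring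

theorem isRadialHessian_fderiv_fderiv_comp_norm_smul (hx : x ≠ 0)
    (hφ : ∀ᶠ t in 𝓝 ‖x‖, HasDerivAt φ (φ' t) t) (hφ' : HasDerivAt φ' φ'' ‖x‖) :
    IsRadialHessian (fderiv ℝ (fderiv ℝ fun y : E => φ ‖y‖ • y) x) (‖x‖⁻¹ • x)
      (‖x‖ * φ'' + 2 * φ' ‖x‖) (φ' ‖x‖) := by
  obtain ⟨B, hB, hBform⟩ := exists_hasFDerivAt_radialFDeriv_isRadialHessian hx hφ.self_of_nhds hφ'
  have hfderiv : fderiv ℝ (fun y : E => φ ‖y‖ • y) =ᶠ[𝓝 x] radialFDeriv φ φ' := by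
    filter_upwards [continuous_norm.continuousAt.eventually hφ, isOpen_ne.mem_nhds hx]
      with y hy hy0
    exact (hasFDerivAt_comp_norm_smul hy0 hy).fderiv
  rwa [hfderiv.fderiv_eq, hB.fderiv]

end

theorem hasDerivAt_div_id_of_contDiffOn_two {ρ : ℝ → ℝ} (hρ : ContDiffOn ℝ 2 ρ (Ioi 0)) {r : ℝ}
    (hr : 0 < r) :
    (∀ᶠ t in 𝓝 r, HasDerivAt (fun t => ρ t / t) (deriv ρ t / t - ρ t / t ^ 2) t) ∧
      HasDerivAt (fun t => deriv ρ t / t - ρ t / t ^ 2)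
        ((deriv (deriv ρ) r - 2 * (deriv ρ r / r - ρ r / r ^ 2)) / r) r := by
  have hρ1 : ∀ᶠ t in 𝓝 r, HasDerivAt ρ (deriv ρ t) t := by
    filter_upwards [Ioi_mem_nhds hr] with t ht
    exact ((hρ.differentiableOn two_ne_zero).differentiableAt (Ioi_mem_nhds ht)).hasDerivAt
  have hρ2 : HasDerivAt (deriv ρ) (deriv (deriv ρ) r) r :=
    (((hρ.deriv_of_isOpen isOpen_Ioi (m := 1) (by norm_num)).differentiableOn
      one_ne_zero).differentiableAt (Ioi_mem_nhds hr)).hasDerivAt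
  refine ⟨?_, ?_⟩
  · filter_upwards [hρ1, Ioi_mem_nhds hr] with t ht ht0
    refine (ht.div (hasDerivAt_id t) ht0.ne').congr_deriv ?_
    simp only [id]
    field_simp
  · refine ((hρ2.div (hasDerivAt_id r) hr.ne').sub
      (hρ1.self_of_nhds.div (hasDerivAt_pow 2 r) (pow_ne_zero 2 hr.ne'))).congr_deriv ?_
    simp only [id]
    field_simp
    ring

/-- for a strictly monotone `C²` function `ρ : (0,∞) → (0,∞)` and
the radial map `h(x) = (x/|x|) ρ(|x|)`, one has
`|D²h(x)| ≈ max{|ρ''(|x|)|, |ρ(|x|)/|x|² - ρ'(|x|)/|x||}` with constants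
depending only on `n`. -/
theorem radial_second_derivative (n : ℕ) (hn : 2 ≤ n) :
    ∃ c C : ℝ, 0 < c ∧ c ≤ C ∧
      ∀ ρ : ℝ → ℝ, (∀ t ∈ Ioi (0 : ℝ), 0 < ρ t) →
        (StrictMonoOn ρ (Ioi 0) ∨ StrictAntiOn ρ (Ioi 0)) →
        ContDiffOn ℝ 2 ρ (Ioi 0) →
        ∀ x : EuclideanSpace ℝ (Fin n), x ≠ 0 →
          c * max |deriv (deriv ρ) ‖x‖| |ρ ‖x‖ / ‖x‖ ^ 2 - deriv ρ ‖x‖ / ‖x‖|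
              ≤ ‖fderiv ℝ (fderiv ℝ (radialMap n ρ)) x‖ ∧
          ‖fderiv ℝ (fderiv ℝ (radialMap n ρ)) x‖
              ≤ C * max |deriv (deriv ρ) ‖x‖| |ρ ‖x‖ / ‖x‖ ^ 2 - deriv ρ ‖x‖ / ‖x‖| := by
  refine ⟨1, 7, one_pos, by norm_num, fun ρ _ _ hρ x hx => ?_⟩
  have hr : 0 < ‖x‖ := norm_pos_iff.2 hx
  obtain ⟨hφ, hφ'⟩ := hasDerivAt_div_id_of_contDiffOn_two hρ hr
  have hB : IsRadialHessian (fderiv ℝ (fderiv ℝ (radialMap n ρ)) x) (‖x‖⁻¹ • x)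
      (deriv (deriv ρ) ‖x‖) (deriv ρ ‖x‖ / ‖x‖ - ρ ‖x‖ / ‖x‖ ^ 2) := by
    have h := isRadialHessian_fderiv_fderiv_comp_norm_smul hx hφ hφ'
    rw [mul_div_cancel₀ _ hr.ne', sub_add_cancel] at h
    exact h
  have hu : ‖‖x‖⁻¹ • x‖ = 1 := norm_smul_inv_norm hx
  have hradial := hB.abs_le_opNorm_radial hu
  have htangential := hB.abs_le_opNorm_tangential hu (by simpa using hn)
  have hupper := hB.opNorm_le hu
  rw [abs_sub_comm] at htangential hupper
  set A := deriv (deriv ρ) ‖x‖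
  set P := ρ ‖x‖ / ‖x‖ ^ 2 - deriv ρ ‖x‖ / ‖x‖
  refine ⟨by simpa using max_le hradial htangential, ?_⟩
  linarith [le_max_left |A| |P|, le_max_right |A| |P|]
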